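/- For any strongly consistently connected system and any factual context c0, the factual distribution μ_{c0} is a reduced coupling of the F-CF subsystem with respect to c0, and the F-CF subsystem admits an identically connected coupling: there exists a probability measure γ on Π_{(q,c) : q ≺ c and q ≺ c0} V_q such that (1) for every context c, the marginal of γ on the coordinates {(q,c) : q ≺ c and q ≺ c0} equals the marginal of μ_c on the coordinates {q : q ≺ c and q ≺ c0}, and (2) γ-almost surely the (q,c)-coordinate equals the (q,c0)-coordinate for every q with q ≺ c and q ≺ c0. -/

import Mathlib

/-! The factual distribution `μ c0` already reproduces every marginal of the F-CF subsystem: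
for a context `c`, strong consistent connectedness applied to the contents measured in both `c`
and `c0` identifies the two marginals. An identically connected coupling is then obtained by
pushing `μ c0` forward along the map that copies the factual value of each content `q` to all
of its counterfactual copies `(q, c)`; the copies agree by construction. -/

open Finset

/-- A probability distribution on a finite type, given by a real-valued mass function:
nonnegative and summing to one. -/
def IsDist {α : Type} [Fintype α] (d : α → ℝ) : Prop :=
  (∀ a, 0 ≤ d a) ∧ ∑ a, d a = 1

/-- The pushforward (marginal) of a mass function along a map. -/
def margin {α β : Type} [Fintype α] [DecidableEq β] (d : α → ℝ) (f : α → β) : β → ℝ :=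
  fun b => ∑ a ∈ univ.filter (fun a => f a = b), d a

open Function

section Margin

variable {α β γ : Type} [Fintype α] [DecidableEq β] [DecidableEq γ]

lemma isDist_margin [Fintype β] {d : α → ℝ} (hd : IsDist d) (f : α → β) :
    IsDist (margin d f) := by
  refine ⟨fun b => sum_nonneg fun a _ => hd.1 a, ?_⟩
  unfold margin
  rw [sum_fiberwise_eq_sum_filter univ univ f d]
  simpa using hd.2

lemma margin_margin [Fintype β] (d : α → ℝ) (f : α → β) (g : β → γ) :
    margin (margin d f) g = margin d (g ∘ f) := by
  funext c
  unfold margin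
  rw [sum_fiberwise_eq_sum_filter univ (univ.filter fun b => g b = c) f d]
  congr 1
  ext a
  simp

lemma margin_comp_apply_of_injective (d : α → ℝ) (f : α → β) {T : β → γ} (hT : Injective T)
    (b : β) : margin d (T ∘ f) (T b) = margin d f b := by
  simp [margin, hT.eq_iff]

lemma exists_eq_of_margin_ne_zero {d : α → ℝ} {f : α → β} {b : β} (h : margin d f b ≠ 0) :
    ∃ a, f a = b := by
  obtain ⟨a, ha, -⟩ := exists_ne_zero_of_sum_ne_zero h
  exact ⟨a, (mem_filter.mp ha).2⟩

end Margin

section System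

variable {Q C : Type} [Fintype Q] [DecidableEq Q] {mea : Q → C → Bool} {V : Q → Type}
  [∀ q, Fintype (V q)] [∀ q, DecidableEq (V q)] {μ : ∀ c : C, (∀ q : {q : Q // mea q c}, V q.1) → ℝ}

/-- Strong consistent connectedness. -/
def IsSCC (μ : ∀ c : C, (∀ q : {q : Q // mea q c}, V q.1) → ℝ) : Prop :=
  ∀ (Q' : Finset Q) (c c' : C) (h : ∀ q ∈ Q', mea q c) (h' : ∀ q ∈ Q', mea q c'),
    margin (μ c) (fun x (q : {q : Q // q ∈ Q'}) => x ⟨q.1, h q.1 q.2⟩)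
      = margin (μ c') (fun x (q : {q : Q // q ∈ Q'}) => x ⟨q.1, h' q.1 q.2⟩)

lemma IsSCC.margin_subtype_eq (hscc : IsSCC μ) (P : Q → Prop) [DecidablePred P] (c c' : C)
    (h : ∀ q, P q → mea q c) (h' : ∀ q, P q → mea q c') :
    margin (μ c) (fun x (q : {q : Q // P q}) => x ⟨q.1, h q.1 q.2⟩)
      = margin (μ c') (fun x (q : {q : Q // P q}) => x ⟨q.1, h' q.1 q.2⟩) := by
  have hmem : ∀ q, q ∈ univ.filter P ↔ P q := by simp
  let T : (∀ q : {q : Q // P q}, V q.1) → (∀ q : {q : Q // q ∈ univ.filter P}, V q.1) :=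
    fun b q => b ⟨q.1, (hmem q.1).mp q.2⟩
  have hT : Injective T := fun b b' hb => funext fun q => congrFun hb ⟨q.1, (hmem q.1).mpr q.2⟩
  funext b
  rw [← margin_comp_apply_of_injective _ _ hT, ← margin_comp_apply_of_injective _ _ hT]
  exact congrFun (hscc _ c c' (fun q hq => h q ((hmem q).mp hq))
    (fun q hq => h' q ((hmem q).mp hq))) (T b)

def copyFactual (c0 : C) (x : ∀ q : {q : Q // mea q c0}, V q.1) :
    ∀ p : {p : Q × C // mea p.1 p.2 ∧ mea p.1 c0}, V p.1.1 :=
  fun p => x ⟨p.1.1, p.2.2⟩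

end System

/-- For any strongly consistently connected system `(μ c)_{c ∈ C}` and any factual context
`c0`: (1) the factual distribution `μ c0` is a reduced coupling of the
factual–counterfactual subsystem with respect to `c0`, i.e., for every context `c` the
marginal of `μ c0` on the contents measured both in `c` and `c0` equals the corresponding
marginal of `μ c`; and (2) the F-CF subsystem admits an identically connected coupling:
a probability measure `γ` on the product over all pairs `(q, c)` with `q ≺ c` and `q ≺ c0`
of `V q`, whose marginal on the coordinates of each context `c` equals the marginal of
`μ c` on `{q : q ≺ c, q ≺ c0}`, and which almost surely makes the `(q, c)`-coordinate
equal to the `(q, c0)`-coordinate. -/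
theorem scc_factual_reduced_coupling_and_ic_coupling
    {Q C : Type} [Fintype Q] [DecidableEq Q] [Fintype C] [DecidableEq C]
    (mea : Q → C → Bool) (V : Q → Type) [∀ q, Fintype (V q)] [∀ q, DecidableEq (V q)]
    (μ : ∀ c : C, (∀ q : {q : Q // mea q c}, V q.1) → ℝ)
    (hdist : ∀ c, IsDist (μ c))
    (hscc : ∀ (Q' : Finset Q) (c c' : C)
        (h : ∀ q ∈ Q', mea q c) (h' : ∀ q ∈ Q', mea q c'),
        margin (μ c) (fun x (q : {q : Q // q ∈ Q'}) => x ⟨q.1, h q.1 q.2⟩)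
          = margin (μ c') (fun x (q : {q : Q // q ∈ Q'}) => x ⟨q.1, h' q.1 q.2⟩))
    (c0 : C) :
    (∀ c : C,
        margin (μ c0) (fun x (q : {q : Q // mea q c ∧ mea q c0}) => x ⟨q.1, q.2.2⟩)
          = margin (μ c) (fun x (q : {q : Q // mea q c ∧ mea q c0}) => x ⟨q.1, q.2.1⟩))
    ∧ ∃ γ : (∀ p : {p : Q × C // mea p.1 p.2 ∧ mea p.1 c0}, V p.1.1) → ℝ,
        IsDist γ ∧
        (∀ c : C,
          margin γ (fun x (q : {q : Q // mea q c ∧ mea q c0}) => x ⟨(q.1, c), q.2⟩)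
            = margin (μ c) (fun x (q : {q : Q // mea q c ∧ mea q c0}) => x ⟨q.1, q.2.1⟩)) ∧
        (∀ x, γ x ≠ 0 → ∀ (q : Q) (c : C) (h : mea q c) (h0 : mea q c0),
          x ⟨(q, c), ⟨h, h0⟩⟩ = x ⟨(q, c0), ⟨h0, h0⟩⟩) := by
  have hscc : IsSCC μ := hscc
  have reduced : ∀ c : C,
      margin (μ c0) (fun x (q : {q : Q // mea q c ∧ mea q c0}) => x ⟨q.1, q.2.2⟩)
        = margin (μ c) (fun x (q : {q : Q // mea q c ∧ mea q c0}) => x ⟨q.1, q.2.1⟩) :=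
    fun c => hscc.margin_subtype_eq _ c0 c (fun _ hq => hq.2) (fun _ hq => hq.1)
  refine ⟨reduced, margin (μ c0) (copyFactual c0), isDist_margin (hdist c0) _,
    fun c => (margin_margin _ _ _).trans (reduced c), ?_⟩
  intro x hx q c h h0
  obtain ⟨a, rfl⟩ := exists_eq_of_margin_ne_zero hx
  rfl
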